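/- arXiv:1109.2477 — 7 statements merged into one kernel-verified Lean document; each statement's English description precedes it below -/
import Mathlib

section
/- Let K ⊆ ℝⁿ be a convex body with b(K) = 0 and x ∈ K. Then (1 − ‖x‖_K)(K ∩ −K) ⊆ (K − x) ∩ (x − K). -/
open Set Pointwise Topology

/- Subadditivity and positive homogeneity of the gauge give
`‖(1 - ‖x‖_K) u + x‖_K ≤ (1 - ‖x‖_K) ‖u‖_K + ‖x‖_K ≤ 1` for `u ∈ K`, so `(1 - ‖x‖_K) K + x ⊆ K`
since `K` is closed. Applied to `u = y` and `u = -y` for `y ∈ K ∩ -K`, this places `(1 - ‖x‖_K) y`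
in `K - x` and in `x - K`. -/

theorem Convex.one_sub_gauge_smul_add_mem {E : Type*} [AddCommGroup E] [Module ℝ E]
    [TopologicalSpace E] [IsTopologicalAddGroup E] [ContinuousSMul ℝ E] {K : Set E}
    (hK : Convex ℝ K) (hKc : IsClosed K) (hK₀ : K ∈ 𝓝 0) {x u : E} (hx : x ∈ K) (hu : u ∈ K) :
    (1 - gauge K x) • u + x ∈ K := by
  have hcoef : 0 ≤ 1 - gauge K x := sub_nonneg.2 (gauge_le_one_of_mem hx)
  suffices h : gauge K ((1 - gauge K x) • u + x) ≤ 1 by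
    simpa only [hKc.closure_eq] using (gauge_le_one_iff_mem_closure hK hK₀).1 h
  calc gauge K ((1 - gauge K x) • u + x)
      ≤ gauge K ((1 - gauge K x) • u) + gauge K x :=
        gauge_add_le hK (absorbent_nhds_zero hK₀) _ _
    _ = (1 - gauge K x) * gauge K u + gauge K x := by
        rw [gauge_smul_of_nonneg hcoef, smul_eq_mul]
    _ ≤ (1 - gauge K x) * 1 + gauge K x := by
        gcongr
        exact gauge_le_one_of_mem hu
    _ = 1 := by ring

/-- For a convex body `K` with `0 ∈ int K` and `x ∈ K`,
`(1 − ‖x‖_K) • (K ∩ −K) ⊆ (K − x) ∩ (x − K)`. -/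
theorem scaled_sym_subset (n : ℕ) (K : Set (Fin n → ℝ))
    (hconv : Convex ℝ K) (hcomp : IsCompact K) (hint : 0 ∈ interior K)
    (x : Fin n → ℝ) (hx : x ∈ K) :
    (1 - gauge K x) • (K ∩ -K) ⊆ ((· - x) '' K) ∩ ((x - ·) '' K) := by
  have hshift {u} (hu : u ∈ K) : (1 - gauge K x) • u + x ∈ K :=
    hconv.one_sub_gauge_smul_add_mem hcomp.isClosed (mem_interior_iff_mem_nhds.mp hint) hx hu
  rintro _ ⟨y, ⟨hyK, hyNK⟩, rfl⟩
  refine ⟨⟨(1 - gauge K x) • y + x, hshift hyK, by module⟩,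
    ⟨(1 - gauge K x) • -y + x, hshift hyNK, by module⟩⟩
end

section
/- Let K ⊆ ℝⁿ be a convex body and x, y ∈ int(K) with max(‖x−y‖_{K−y}, ‖y−x‖_{K−y}) ≤ α < 1. Then for every z ∈ ℝⁿ, ‖z − y‖_{K−y} ≤ ‖z − x‖_{K−x} + α·|1 − ‖z − x‖_{K−x}|. -/
/-!
Write `t = ‖z - x‖_{K-x}`. For every `s > t` there is `k ∈ K` with `z - x = s • (k - x)`, hence
`z - y = s • (k - y) + (1 - s) • (x - y)`. Subadditivity of the gauge of `K - y`, together with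
`‖k - y‖_{K-y} ≤ 1` and `‖(1 - s) • (x - y)‖_{K-y} ≤ α |1 - s|`, gives
`‖z - y‖_{K-y} ≤ s + α |1 - s|`; letting `s ↓ t` proves the estimate.
-/

open Set Pointwise

section Gauge

variable {E : Type*} [AddCommGroup E] [Module ℝ E] {S : Set E}

theorem gauge_smul_le_max_mul_abs (r : ℝ) (w : E) :
    gauge S (r • w) ≤ max (gauge S w) (gauge S (-w)) * |r| := by
  rcases le_total 0 r with hr | hr
  · rw [gauge_smul_of_nonneg hr, smul_eq_mul, abs_of_nonneg hr, mul_comm]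
    exact mul_le_mul_of_nonneg_right (le_max_left _ _) hr
  · rw [← neg_smul_neg r w, gauge_smul_of_nonneg (neg_nonneg.2 hr), smul_eq_mul,
      abs_of_nonpos hr, mul_comm]
    exact mul_le_mul_of_nonneg_right (le_max_right _ _) (neg_nonneg.2 hr)

theorem gauge_smul_add_one_sub_smul_le (hS : Convex ℝ S) (hSa : Absorbent ℝ S) {v : E}
    (hv : v ∈ S) (w : E) {s : ℝ} (hs : 0 ≤ s) :
    gauge S (s • v + (1 - s) • w) ≤ s + max (gauge S w) (gauge S (-w)) * |1 - s| :=
  calc gauge S (s • v + (1 - s) • w) ≤ gauge S (s • v) + gauge S ((1 - s) • w) :=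
        gauge_add_le hS hSa _ _
    _ ≤ s * 1 + max (gauge S w) (gauge S (-w)) * |1 - s| := by
        rw [gauge_smul_of_nonneg hs, smul_eq_mul]
        gcongr
        · exact gauge_le_one_of_mem hv
        · exact gauge_smul_le_max_mul_abs _ _
    _ = s + max (gauge S w) (gauge S (-w)) * |1 - s| := by rw [mul_one]

theorem mem_smul_of_gauge_lt (hS : Convex ℝ S) (hSa : Absorbent ℝ S) {w : E} {s : ℝ}
    (hs : gauge S w < s) : w ∈ s • S := by
  have hw : w ∈ {u | gauge S u ≤ gauge S w} := show gauge S w ≤ gauge S w from le_rfl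
  rw [setOfPred_gauge_le_eq hS hSa.zero_mem hSa (gauge_nonneg w)] at hw
  exact mem_iInter₂.1 hw s hs

end Gauge

section Recenter

variable {E : Type*} [AddCommGroup E] [Module ℝ E] {K : Set E}

theorem Convex.image_sub_const (hK : Convex ℝ K) (c : E) : Convex ℝ ((· - c) '' K) := by
  simpa [sub_eq_neg_add] using hK.translate (-c)

theorem absorbent_image_sub_of_mem_interior [TopologicalSpace E] [IsTopologicalAddGroup E]
    [ContinuousSMul ℝ E] {c : E} (hc : c ∈ interior K) : Absorbent ℝ ((· - c) '' K) :=
  absorbent_nhds_zero <| by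
    simpa using (isOpenMap_sub_right c).image_mem_nhds (mem_interior_iff_mem_nhds.1 hc)

theorem gauge_image_sub_recenter_le (hK : Convex ℝ K) {x y : E}
    (hx : Absorbent ℝ ((· - x) '' K)) (hy : Absorbent ℝ ((· - y) '' K)) (z : E) :
    gauge ((· - y) '' K) (z - y) ≤ gauge ((· - x) '' K) (z - x) +
      max (gauge ((· - y) '' K) (x - y)) (gauge ((· - y) '' K) (y - x)) *
        |1 - gauge ((· - x) '' K) (z - x)| := by
  set t := gauge ((· - x) '' K) (z - x)
  set f : ℝ → ℝ := fun s ↦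
    s + max (gauge ((· - y) '' K) (x - y)) (gauge ((· - y) '' K) (y - x)) * |1 - s|
  have bound : ∀ s > t, gauge ((· - y) '' K) (z - y) ≤ f s := by
    intro s hs
    obtain ⟨_, ⟨k, hk, rfl⟩, hzx⟩ := mem_smul_of_gauge_lt (hK.image_sub_const x) hx hs
    have hz : z - y = s • (k - y) + (1 - s) • (x - y) := by
      linear_combination (norm := module) -hzx
    have := gauge_smul_add_one_sub_smul_le (hK.image_sub_const y) hy ⟨k, hk, rfl⟩ (x - y)
      ((gauge_nonneg _).trans hs.le)
    rwa [neg_sub, ← hz] at this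
  have hf : Continuous f := by fun_prop
  exact ge_of_tendsto (hf.continuousWithinAt (s := Ioi t) (x := t))
    (eventually_nhdsWithin_of_forall bound)

end Recenter

theorem gauge_recenter_le_general (n : ℕ) (K : Set (Fin n → ℝ))
    (hconv : Convex ℝ K)
    (x y : Fin n → ℝ) (hx : x ∈ interior K) (hy : y ∈ interior K) (α : ℝ)
    (hα : max (gauge ((· - y) '' K) (x - y)) (gauge ((· - y) '' K) (y - x)) ≤ α)
    (z : Fin n → ℝ) :
    gauge ((· - y) '' K) (z - y) ≤
      gauge ((· - x) '' K) (z - x) + α * |1 - gauge ((· - x) '' K) (z - x)| :=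
  calc gauge ((· - y) '' K) (z - y)
      ≤ gauge ((· - x) '' K) (z - x) +
          max (gauge ((· - y) '' K) (x - y)) (gauge ((· - y) '' K) (y - x)) *
            |1 - gauge ((· - x) '' K) (z - x)| :=
        gauge_image_sub_recenter_le hconv (absorbent_image_sub_of_mem_interior hx)
          (absorbent_image_sub_of_mem_interior hy) z
    _ ≤ gauge ((· - x) '' K) (z - x) + α * |1 - gauge ((· - x) '' K) (z - x)| := by gcongr

/-- Recentring estimate: if `x, y ∈ int K` with
`max(‖x−y‖_{K−y}, ‖y−x‖_{K−y}) ≤ α < 1`, then for every `z`,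
`‖z − y‖_{K−y} ≤ ‖z − x‖_{K−x} + α·|1 − ‖z − x‖_{K−x}|`. -/
theorem gauge_recenter_le (n : ℕ) (K : Set (Fin n → ℝ))
    (hconv : Convex ℝ K) (hcomp : IsCompact K)
    (x y : Fin n → ℝ) (hx : x ∈ interior K) (hy : y ∈ interior K) (α : ℝ)
    (hα : max (gauge ((· - y) '' K) (x - y)) (gauge ((· - y) '' K) (y - x)) ≤ α)
    (hα1 : α < 1) (z : Fin n → ℝ) :
    gauge ((· - y) '' K) (z - y) ≤
      gauge ((· - x) '' K) (z - x) + α * |1 - gauge ((· - x) '' K) (z - x)| :=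
  gauge_recenter_le_general n K hconv x y hx hy α hα z
end

section
/- Let K ⊆ ℝⁿ be a convex body and x, y ∈ int(K) with max(‖x−y‖_{K−y}, ‖y−x‖_{K−y}) ≤ α < 1. Then y − x ∈ (α/(1−α))(K − x) and x − y ∈ (α/(1−α))(K − x). -/
/-!
Recentre at `y` and write `C = K - y`. Since `x - y` and `y - x` both have gauge at most `α`, every
multiple `t • (y - x)` with `|t| α ≤ 1` lies in the closed convex body `C`. Membership of
`y - x` and `x - y` in `(α / (1 - α)) (K - x)` means that `x + ((1 - α)/α) (y - x)` and
`x + ((1 - α)/α) (x - y)` lie in `K`; recentred at `y` these are the multiples `(1 - 2α)/α` and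
`-1/α` of `y - x`. For `α = 0` boundedness of `K` forces `x = y`.
-/

open Set Pointwise Filter Topology

section Module

variable {E : Type*} [AddCommGroup E] [Module ℝ E]

theorem gauge_smul_le_abs_mul {s : Set E} {v : E} {a : ℝ} (hv : gauge s v ≤ a)
    (hnv : gauge s (-v) ≤ a) (t : ℝ) : gauge s (t • v) ≤ |t| * a := by
  rcases le_or_gt 0 t with ht | ht
  · rw [gauge_smul_of_nonneg ht, smul_eq_mul, abs_of_nonneg ht]
    exact mul_le_mul_of_nonneg_left hv ht
  · rw [← neg_smul_neg, gauge_smul_of_nonneg (neg_nonneg.2 ht.le), smul_eq_mul, abs_of_neg ht]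
    exact mul_le_mul_of_nonneg_left hnv (neg_nonneg.2 ht.le)

theorem mem_smul_image_sub_iff {s : Set E} {x : E} {t : ℝ} (ht : t ≠ 0) (v : E) :
    v ∈ t • ((· - x) '' s) ↔ x + t⁻¹ • v ∈ s := by
  rw [mem_smul_set_iff_inv_smul_mem₀ ht]
  simp [sub_eq_iff_eq_add, add_comm]

end Module

section Topological

variable {E : Type*} [AddCommGroup E] [TopologicalSpace E] [IsTopologicalAddGroup E]
  {K : Set E} {x y : E}

theorem image_sub_mem_nhds_zero (hy : y ∈ interior K) : (· - y) '' K ∈ 𝓝 (0 : E) := by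
  rw [← mem_interior_iff_mem_nhds, ← sub_self y]
  exact (Homeomorph.subRight y).isOpenMap.image_interior_subset K ⟨y, hy, rfl⟩

variable [Module ℝ E] [ContinuousSMul ℝ E]

theorem mem_of_gauge_image_sub_le_one (hconv : Convex ℝ K) (hclosed : IsClosed K)
    (hy : y ∈ interior K) (h : gauge ((· - y) '' K) (x - y) ≤ 1) : x ∈ K := by
  have hCconv : Convex ℝ ((· - y) '' K) := by
    simpa only [sub_eq_neg_add] using hconv.translate (-y)
  have hCclosed : IsClosed ((· - y) '' K) := (Homeomorph.subRight y).isClosedMap K hclosed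
  rw [gauge_le_one_iff_mem_closure hCconv (image_sub_mem_nhds_zero hy), hCclosed.closure_eq] at h
  simpa using h

theorem add_smul_sub_mem_of_gauge_le (hconv : Convex ℝ K) (hclosed : IsClosed K)
    (hy : y ∈ interior K) {α t : ℝ} (hxy : gauge ((· - y) '' K) (x - y) ≤ α)
    (hyx : gauge ((· - y) '' K) (y - x) ≤ α) (ht : |t| * α ≤ 1) : y + t • (y - x) ∈ K :=
  mem_of_gauge_image_sub_le_one hconv hclosed hy <| by
    rw [add_sub_cancel_left]
    exact (gauge_smul_le_abs_mul hyx (by rwa [neg_sub]) t).trans ht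

end Topological

theorem eq_of_gauge_image_sub_eq_zero {E : Type*} [NormedAddCommGroup E] [NormedSpace ℝ E]
    {K : Set E} {x y : E} (hbdd : Bornology.IsBounded K) (hy : y ∈ interior K)
    (h : gauge ((· - y) '' K) (x - y) = 0) : x = y := by
  have hb : Bornology.IsVonNBounded ℝ ((· - y) '' K) := by
    rw [NormedSpace.isVonNBounded_iff]
    exact (LipschitzWith.id.sub (LipschitzWith.const y)).isBounded_image hbdd
  rwa [gauge_eq_zero (absorbent_nhds_zero (image_sub_mem_nhds_zero hy)) hb, sub_eq_zero] at h

theorem diff_mem_scaled_recentered_general (n : ℕ) (K : Set (Fin n → ℝ))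
    (hconv : Convex ℝ K) (hcomp : IsCompact K)
    (x y : Fin n → ℝ) (hy : y ∈ interior K) (α : ℝ)
    (hα : max (gauge ((· - y) '' K) (x - y)) (gauge ((· - y) '' K) (y - x)) ≤ α)
    (hα1 : α < 1) :
    y - x ∈ (α / (1 - α)) • ((· - x) '' K) ∧
      x - y ∈ (α / (1 - α)) • ((· - x) '' K) := by
  obtain ⟨hxy, hyx⟩ := max_le_iff.1 hα
  rcases ((gauge_nonneg _).trans hxy).eq_or_lt with rfl | hα0
  · obtain rfl := eq_of_gauge_image_sub_eq_zero hcomp.isBounded hy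
      (le_antisymm hxy (gauge_nonneg _))
    have hne : ((· - x) '' K).Nonempty := ⟨_, mem_image_of_mem _ (interior_subset hy)⟩
    simp [zero_smul_set hne]
  have key t := add_smul_sub_mem_of_gauge_le (t := t) hconv hcomp.isClosed hy hxy hyx
  have hscale : α / (1 - α) ≠ 0 := div_ne_zero hα0.ne' (sub_pos.2 hα1).ne'
  rw [mem_smul_image_sub_iff hscale, mem_smul_image_sub_iff hscale, inv_div]
  constructor
  · convert key ((1 - 2 * α) / α) ?_ using 1
    · match_scalars <;> field_simp <;> ring
    · rw [abs_div, abs_of_pos hα0, div_mul_cancel₀ _ hα0.ne']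
      exact abs_le.2 ⟨by linarith, by linarith⟩
  · convert key (-1 / α) ?_ using 1
    · match_scalars <;> field_simp <;> ring
    · rw [abs_div, abs_of_pos hα0, div_mul_cancel₀ _ hα0.ne', abs_neg, abs_one]

/-- If `x, y ∈ int K` with `max(‖x−y‖_{K−y}, ‖y−x‖_{K−y}) ≤ α < 1`, then
`y − x ∈ (α/(1−α))(K − x)` and `x − y ∈ (α/(1−α))(K − x)`. -/
theorem diff_mem_scaled_recentered (n : ℕ) (K : Set (Fin n → ℝ))
    (hconv : Convex ℝ K) (hcomp : IsCompact K)
    (x y : Fin n → ℝ) (hx : x ∈ interior K) (hy : y ∈ interior K) (α : ℝ)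
    (hα : max (gauge ((· - y) '' K) (x - y)) (gauge ((· - y) '' K) (y - x)) ≤ α)
    (hα1 : α < 1) :
    y - x ∈ (α / (1 - α)) • ((· - x) '' K) ∧
      x - y ∈ (α / (1 - α)) • ((· - x) '' K) :=
  diff_mem_scaled_recentered_general n K hconv hcomp x y hy α hα hα1
end

section
/- Let C ⊆ ℝⁿ be a convex body with 0 ∈ int(C), β > 0, and v ∈ ℝⁿ with β ≤ ‖v‖_C ≤ (3/2)β. Then (v/2) + (β/4)(C ∩ −C) ⊆ βC ∩ (v − βC). -/
/-! Write `v = (3β/2) u` with `u ∈ C`, which is possible because `C` is closed. For `x ∈ C ∩ -C`,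
`v/2 + (β/4) x = β ((3/4) u + (1/4) x)` and `v - (v/2 + (β/4) x) = β ((3/4) u + (1/4) (-x))`,
and both convex combinations lie in `C` since `x` and `-x` do. -/

open Set Pointwise

theorem IsClosed.mem_smul_of_gauge_le {E : Type*} [AddCommGroup E] [Module ℝ E]
    [TopologicalSpace E] [ContinuousSMul ℝ E] {s : Set E} (hs : IsClosed s)
    (hconv : Convex ℝ s) (hs₀ : 0 ∈ s) (habs : Absorbent ℝ s) {r : ℝ} (hr : 0 < r) {v : E}
    (hv : gauge s v ≤ r) : v ∈ r • s := by
  have hgauge : gauge s (r⁻¹ • v) ≤ 1 := by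
    rwa [gauge_smul_of_nonneg (inv_nonneg.2 hr.le), smul_eq_mul, inv_mul_le_one₀ hr]
  rw [mem_smul_set_iff_inv_smul_mem₀ hr.ne', ← hs.closure_eq]
  exact mem_closure_of_gauge_le_one hconv hs₀ habs hgauge

theorem Convex.inv_two_smul_add_smul_mem_smul {E : Type*} [AddCommGroup E] [Module ℝ E]
    {s : Set E} (hconv : Convex ℝ s) {β : ℝ} {v x : E} (hv : v ∈ ((3 / 2) * β) • s)
    (hx : x ∈ s) : (2 : ℝ)⁻¹ • v + (β / 4) • x ∈ β • s := by
  obtain ⟨u, hu, rfl⟩ := hv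
  have hcomb : (3 / 4 : ℝ) • u + (1 / 4 : ℝ) • x ∈ s :=
    hconv hu hx (by norm_num) (by norm_num) (by norm_num)
  convert smul_mem_smul_set (a := β) hcomb using 1
  module

theorem half_v_add_subset_general (n : ℕ) (C : Set (Fin n → ℝ))
    (hconv : Convex ℝ C) (hcomp : IsCompact C) (hint : 0 ∈ interior C)
    (β : ℝ) (hβ : 0 < β) (v : Fin n → ℝ)
    (hv2 : gauge C v ≤ (3 / 2) * β) :
    (fun w => (2 : ℝ)⁻¹ • v + w) '' ((β / 4) • (C ∩ -C)) ⊆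
      (β • C) ∩ ((fun c => v - c) '' (β • C)) := by
  have hnhds : C ∈ nhds 0 := mem_interior_iff_mem_nhds.mp hint
  have hv : v ∈ ((3 / 2) * β) • C :=
    hcomp.isClosed.mem_smul_of_gauge_le hconv (mem_of_mem_nhds hnhds)
      (absorbent_nhds_zero hnhds) (by positivity) hv2
  rintro _ ⟨_, ⟨x, ⟨hx, hnx⟩, rfl⟩, rfl⟩
  refine ⟨hconv.inv_two_smul_add_smul_mem_smul hv hx,
    _, hconv.inv_two_smul_add_smul_mem_smul hv (Set.mem_neg.mp hnx), ?_⟩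
  simp only
  module

/-- If `β ≤ ‖v‖_C ≤ (3/2)β`, then `(v/2) + (β/4)(C ∩ −C) ⊆ βC ∩ (v − βC)`. -/
theorem half_v_add_subset (n : ℕ) (C : Set (Fin n → ℝ))
    (hconv : Convex ℝ C) (hcomp : IsCompact C) (hint : 0 ∈ interior C)
    (β : ℝ) (hβ : 0 < β) (v : Fin n → ℝ)
    (hv1 : β ≤ gauge C v) (hv2 : gauge C v ≤ (3 / 2) * β) :
    (fun w => (2 : ℝ)⁻¹ • v + w) '' ((β / 4) • (C ∩ -C)) ⊆
      (β • C) ∩ ((fun c => v - c) '' (β • C)) :=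
  half_v_add_subset_general n C hconv hcomp hint β hβ v hv2
end

section
/- Let C ⊆ ℝⁿ be a convex body with 0 ∈ int(C), β > 0, and v ∈ ℝⁿ with β ≤ ‖v‖_C ≤ (3/2)β. Define C_v⁺ = βC ∩ (v − βC) and C_v⁻ = (βC − v) ∩ (−βC). Then int(C_v⁺) ∩ int(C_v⁻) = ∅. -/
open Set Pointwise

/-!
If `x` lay in both interiors, then `v - x` and `x + v` would both lie in `int(βC)`, so their
gauges would be `< β`. But they sum to `2v`, and subadditivity of the gauge gives
`2β ≤ 2‖v‖_C ≤ ‖v - x‖_C + ‖x + v‖_C < 2β`.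
-/

section TopologicalAddGroup

variable {G : Type*} [TopologicalSpace G] [AddCommGroup G] [IsTopologicalAddGroup G]

theorem mem_interior_image_sub_left {s : Set G} {v x : G} :
    x ∈ interior ((fun c => v - c) '' s) ↔ v - x ∈ interior s := by
  rw [show (fun c => v - c) '' s = Homeomorph.subLeft v '' s from rfl,
    ← Homeomorph.image_interior, (Homeomorph.subLeft v).image_eq_preimage_symm]
  simp [neg_add_eq_sub]

theorem mem_interior_image_sub_right {s : Set G} {v x : G} :
    x ∈ interior ((fun c => c - v) '' s) ↔ x + v ∈ interior s := by
  rw [show (fun c => c - v) '' s = Homeomorph.subRight v '' s from rfl,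
    ← Homeomorph.image_interior, (Homeomorph.subRight v).image_eq_preimage_symm]
  simp

end TopologicalAddGroup

section Gauge

variable {E : Type*} [AddCommGroup E] [Module ℝ E] [TopologicalSpace E] [ContinuousSMul ℝ E]
  {C : Set E} {β : ℝ}

theorem gauge_lt_of_mem_interior_smul (hβ : 0 < β) {y : E} (hy : y ∈ interior (β • C)) :
    gauge C y < β := by
  have h : gauge (β • C) y < 1 := interior_subset_gauge_lt_one _ hy
  rwa [gauge_smul_left_of_nonneg hβ.le, Pi.smul_apply, smul_eq_mul,
    inv_mul_lt_iff₀ hβ, mul_one] at h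

theorem disjoint_interior_image_sub_left_image_sub_right [IsTopologicalAddGroup E]
    (hconv : Convex ℝ C) (habs : Absorbent ℝ C) (hβ : 0 < β) {v : E} (hv : β ≤ gauge C v) :
    Disjoint (interior ((fun c => v - c) '' (β • C))) (interior ((fun c => c - v) '' (β • C))) := by
  rw [Set.disjoint_left]
  intro x hleft hright
  have hsub := gauge_lt_of_mem_interior_smul hβ (mem_interior_image_sub_left.mp hleft)
  have hadd := gauge_lt_of_mem_interior_smul hβ (mem_interior_image_sub_right.mp hright)
  have hsum : (v - x) + (x + v) = (2 : ℝ) • v := by module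
  have htriangle := gauge_add_le hconv habs (v - x) (x + v)
  rw [hsum, gauge_smul_of_nonneg zero_le_two, smul_eq_mul] at htriangle
  linarith

end Gauge

theorem interiors_disjoint_general (n : ℕ) (C : Set (Fin n → ℝ))
    (hconv : Convex ℝ C) (hint : 0 ∈ interior C)
    (β : ℝ) (hβ : 0 < β) (v : Fin n → ℝ)
    (hv1 : β ≤ gauge C v) :
    interior ((β • C) ∩ ((fun c => v - c) '' (β • C))) ∩
      interior (((fun c => c - v) '' (β • C)) ∩ (-(β • C))) = ∅ := by
  have habs : Absorbent ℝ C := absorbent_nhds_zero (mem_interior_iff_mem_nhds.mp hint)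
  exact ((disjoint_interior_image_sub_left_image_sub_right hconv habs hβ hv1).mono
      (interior_mono inter_subset_right) (interior_mono inter_subset_left)).inter_eq

/-- For `β ≤ ‖v‖_C ≤ (3/2)β`, the interiors of `C_v⁺ = βC ∩ (v − βC)` and
`C_v⁻ = (βC − v) ∩ (−βC)` are disjoint. -/
theorem interiors_disjoint (n : ℕ) (C : Set (Fin n → ℝ))
    (hconv : Convex ℝ C) (hcomp : IsCompact C) (hint : 0 ∈ interior C)
    (β : ℝ) (hβ : 0 < β) (v : Fin n → ℝ)
    (hv1 : β ≤ gauge C v) (hv2 : gauge C v ≤ (3 / 2) * β) :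
    interior ((β • C) ∩ ((fun c => v - c) '' (β • C))) ∩
      interior (((fun c => c - v) '' (β • C)) ∩ (-(β • C))) = ∅ :=
  interiors_disjoint_general n C hconv hint β hβ v hv1
end

section
/- Let C ⊆ ℝⁿ be a γ-symmetric convex body with 0 ∈ int(C). Then for any D > 0 and any finite set of points y₁, …, y_m ∈ D(C ∪ −C) that are pairwise far in the symmetrized gauge, i.e. ‖y_i − y_j‖_{C ∩ −C} > D/2 for all i ≠ j, one has m ≤ 2(5/γ)ⁿ. -/
/-!
The translates `yᵢ + (D/4)(C ∩ -C)` are pairwise disjoint, since the gauge of the symmetric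
convex body `C ∩ -C` is subadditive and even, and by convexity of `C` they all lie in
`(5D/4)(C ∪ -C)`. Comparing volumes gives `m vol(C ∩ -C) ≤ 2 · 5ⁿ vol C`, and `γ`-symmetry
turns this into `m γⁿ ≤ 2 · 5ⁿ`.
-/

open Set Pointwise Function MeasureTheory Module Topology

theorem neg_mem_inter_neg {E : Type*} [InvolutiveNeg E] {s : Set E} {x : E}
    (hx : x ∈ s ∩ -s) : -x ∈ s ∩ -s :=
  ⟨hx.2, by simpa using hx.1⟩

theorem inter_neg_mem_nhds_zero {E : Type*} [AddGroup E] [TopologicalSpace E]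
    [IsTopologicalAddGroup E] {s : Set E} (hs : s ∈ 𝓝 0) : s ∩ -s ∈ 𝓝 0 :=
  Filter.inter_mem hs (neg_mem_nhds_zero E hs)

section Convex

variable {E : Type*} [AddCommGroup E] [Module ℝ E]

theorem disjoint_vadd_smul_of_two_mul_lt_gauge {K : Set E} (hK : Convex ℝ K)
    (hKabs : Absorbent ℝ K) (hKneg : ∀ x ∈ K, -x ∈ K) {r : ℝ} (hr : 0 ≤ r) {a b : E}
    (hab : 2 * r < gauge K (a - b)) : Disjoint (a +ᵥ r • K) (b +ᵥ r • K) := by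
  rw [Set.disjoint_left]
  rintro _ ⟨u, hu, rfl⟩ ⟨v, hv, huv⟩
  have hdiff : a - b = v + -u := by
    rw [← sub_eq_add_neg, sub_eq_sub_iff_add_eq_add]
    exact huv.symm.trans (add_comm b v)
  have htri := gauge_add_le hK hKabs v (-u)
  rw [gauge_neg hKneg, ← hdiff] at htri
  linarith [gauge_le_of_mem hr hu, gauge_le_of_mem hr hv]

theorem Convex.vadd_smul_subset_add_smul {C K : Set E} (hC : Convex ℝ C) (hKC : K ⊆ C)
    {s t : ℝ} (hs : 0 ≤ s) (ht : 0 ≤ t) {a : E} (ha : a ∈ s • C) :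
    a +ᵥ t • K ⊆ (s + t) • C := by
  rw [hC.add_smul hs ht]
  rintro _ ⟨k, hk, rfl⟩
  exact add_mem_add ha (smul_set_mono hKC hk)

theorem Convex.vadd_smul_inter_neg_subset {C : Set E} (hC : Convex ℝ C) {s t : ℝ} (hs : 0 ≤ s)
    (ht : 0 ≤ t) {a : E} (ha : a ∈ s • (C ∪ -C)) :
    a +ᵥ t • (C ∩ -C) ⊆ (s + t) • (C ∪ -C) := by
  rw [smul_set_union] at ha ⊢
  rcases ha with ha | ha
  · exact (hC.vadd_smul_subset_add_smul inter_subset_left hs ht ha).trans subset_union_left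
  · exact (hC.neg.vadd_smul_subset_add_smul inter_subset_right hs ht ha).trans subset_union_right

end Convex

theorem card_mul_le_measure_of_pairwise_disjoint {α ι : Type*} [MeasurableSpace α] [Fintype ι]
    {μ : Measure α} {f : ι → Set α} {S : Set α} {v : ENNReal}
    (hf : ∀ i, NullMeasurableSet (f i) μ) (hd : Pairwise (Disjoint on f))
    (hμ : ∀ i, μ (f i) = v) (hS : ∀ i, f i ⊆ S) : Fintype.card ι * v ≤ μ S :=
  calc (Fintype.card ι : ENNReal) * v = ∑' i, μ (f i) := by simp [hμ, tsum_fintype]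
    _ ≤ μ (⋃ i, f i) := tsum_meas_le_meas_iUnion_of_disjoint₀ μ hf fun _ _ h => (hd h).aedisjoint
    _ ≤ μ S := measure_mono (iUnion_subset hS)

section AddHaar

variable {E : Type*} [NormedAddCommGroup E] [NormedSpace ℝ E] [MeasurableSpace E] [BorelSpace E]
  [FiniteDimensional ℝ E] (μ : Measure E) [μ.IsAddHaarMeasure]

theorem addHaar_vadd_smul_of_nonneg (a : E) {r : ℝ} (hr : 0 ≤ r) (s : Set E) :
    μ (a +ᵥ r • s) = ENNReal.ofReal (r ^ finrank ℝ E) * μ s := by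
  rw [measure_vadd, Measure.addHaar_smul_of_nonneg μ hr]

theorem addHaar_smul_union_neg_le {r : ℝ} (hr : 0 ≤ r) (s : Set E) :
    μ (r • (s ∪ -s)) ≤ 2 * ENNReal.ofReal (r ^ finrank ℝ E) * μ s :=
  calc μ (r • (s ∪ -s)) ≤ μ (r • s) + μ (r • -s) := by
        rw [smul_set_union]; exact measure_union_le _ _
    _ = 2 * ENNReal.ofReal (r ^ finrank ℝ E) * μ s := by
        rw [Measure.addHaar_smul_of_nonneg μ hr, Measure.addHaar_smul_of_nonneg μ hr,
          Measure.measure_neg]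
        ring

theorem card_mul_addHaar_inter_neg_le {ι : Type*} [Fintype ι] {C : Set E} (hC : Convex ℝ C)
    (hCm : MeasurableSet C) (hC0 : C ∈ 𝓝 0) {D : ℝ} (hD : 0 < D) {y : ι → E}
    (hy : ∀ i, y i ∈ D • (C ∪ -C))
    (hfar : Pairwise fun i j => D / 2 < gauge (C ∩ -C) (y i - y j)) :
    Fintype.card ι * μ (C ∩ -C) ≤ 2 * 5 ^ finrank ℝ E * μ C := by
  have hr : 0 ≤ D / 4 := by positivity
  have hpack := card_mul_le_measure_of_pairwise_disjoint (μ := μ)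
    (f := fun i => y i +ᵥ (D / 4) • (C ∩ -C))
    (fun i => (((hCm.inter hCm.neg).const_smul_of_ne_zero (by positivity)).const_vadd _
      ).nullMeasurableSet)
    (fun i j hij => disjoint_vadd_smul_of_two_mul_lt_gauge (hC.inter hC.neg)
      (absorbent_nhds_zero (inter_neg_mem_nhds_zero hC0)) (fun _ => neg_mem_inter_neg) hr
      (by linarith [hfar hij]))
    (fun i => addHaar_vadd_smul_of_nonneg μ (y i) hr _)
    (fun i => hC.vadd_smul_inter_neg_subset hD.le hr (hy i))
  have hbig := addHaar_smul_union_neg_le μ (by positivity : 0 ≤ D + D / 4) C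
  have hscale : ENNReal.ofReal ((D + D / 4) ^ finrank ℝ E)
      = 5 ^ finrank ℝ E * ENNReal.ofReal ((D / 4) ^ finrank ℝ E) := by
    rw [show D + D / 4 = 5 * (D / 4) by ring, mul_pow, ENNReal.ofReal_mul (by positivity),
      ENNReal.ofReal_pow (by norm_num), ENNReal.ofReal_ofNat]
  have hpos : ENNReal.ofReal ((D / 4) ^ finrank ℝ E) ≠ 0 := by
    rw [ENNReal.ofReal_ne_zero_iff]; positivity
  refine (ENNReal.mul_le_mul_iff_right hpos ENNReal.ofReal_ne_top).1 ?_
  calc ENNReal.ofReal ((D / 4) ^ finrank ℝ E) * (Fintype.card ι * μ (C ∩ -C))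
      = Fintype.card ι * (ENNReal.ofReal ((D / 4) ^ finrank ℝ E) * μ (C ∩ -C)) := by ring
    _ ≤ 2 * ENNReal.ofReal ((D + D / 4) ^ finrank ℝ E) * μ C := hpack.trans hbig
    _ = ENNReal.ofReal ((D / 4) ^ finrank ℝ E) * (2 * 5 ^ finrank ℝ E * μ C) := by
      rw [hscale]; ring

end AddHaar

theorem packing_bound_general (n : ℕ) (C : Set (Fin n → ℝ))
    (hconv : Convex ℝ C) (hcomp : IsCompact C) (hint : 0 ∈ interior C)
    (γ : ℝ) (hγ0 : 0 < γ)
    (hsym : ENNReal.ofReal (γ ^ n) * MeasureTheory.volume C ≤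
      MeasureTheory.volume (C ∩ -C))
    (D : ℝ) (hD : 0 < D) (m : ℕ) (y : Fin m → (Fin n → ℝ))
    (hy : ∀ i, y i ∈ D • (C ∪ -C))
    (hfar : ∀ i j, i ≠ j → D / 2 < gauge (C ∩ -C) (y i - y j)) :
    (m : ℝ) ≤ 2 * (5 / γ) ^ n := by
  have hpack := card_mul_addHaar_inter_neg_le volume hconv hcomp.measurableSet
    (mem_interior_iff_mem_nhds.1 hint) hD hy hfar
  rw [Fintype.card_fin, finrank_fin_fun] at hpack
  have hCpos : 0 < volume C := Measure.measure_pos_of_nonempty_interior _ ⟨0, hint⟩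
  have hvol : ENNReal.ofReal (m * γ ^ n) * volume C ≤ ENNReal.ofReal (2 * 5 ^ n) * volume C :=
    calc ENNReal.ofReal (m * γ ^ n) * volume C = m * (ENNReal.ofReal (γ ^ n) * volume C) := by
          rw [ENNReal.ofReal_mul (by positivity), ENNReal.ofReal_natCast, mul_assoc]
      _ ≤ m * volume (C ∩ -C) := by gcongr
      _ ≤ 2 * 5 ^ n * volume C := hpack
      _ = ENNReal.ofReal (2 * 5 ^ n) * volume C := by
          rw [ENNReal.ofReal_mul (by norm_num), ENNReal.ofReal_pow (by norm_num)]
          norm_num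
  have hreal : (m : ℝ) * γ ^ n ≤ 2 * 5 ^ n := (ENNReal.ofReal_le_ofReal_iff (by positivity)).1
    ((ENNReal.mul_le_mul_iff_left hCpos.ne' hcomp.measure_lt_top.ne).1 hvol)
  rwa [div_pow, ← mul_div_assoc, le_div_iff₀ (by positivity)]

/-- Packing bound: for a `γ`-symmetric convex body `C`, any points
`y₁, …, y_m ∈ D(C ∪ −C)` that are pairwise more than `D/2` apart in the gauge of
`C ∩ −C` satisfy `m ≤ 2(5/γ)ⁿ`. -/
theorem packing_bound (n : ℕ) (C : Set (Fin n → ℝ))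
    (hconv : Convex ℝ C) (hcomp : IsCompact C) (hint : 0 ∈ interior C)
    (γ : ℝ) (hγ0 : 0 < γ) (hγ1 : γ ≤ 1)
    (hsym : ENNReal.ofReal (γ ^ n) * MeasureTheory.volume C ≤
      MeasureTheory.volume (C ∩ -C))
    (D : ℝ) (hD : 0 < D) (m : ℕ) (y : Fin m → (Fin n → ℝ))
    (hy : ∀ i, y i ∈ D • (C ∪ -C))
    (hfar : ∀ i j, i ≠ j → D / 2 < gauge (C ∩ -C) (y i - y j)) :
    (m : ℝ) ≤ 2 * (5 / γ) ^ n :=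
  packing_bound_general n C hconv hcomp hint γ hγ0 hsym D hD m y hy hfar
end

section
/- Let C ⊆ ℝⁿ be a γ-symmetric convex body with 0 ∈ int(C), β > 0, and 0 < ε ≤ 1/2. If Λ ⊆ 4β(C ∪ −C) is a set of points such that the translates x + (εβ/2)·int(C ∩ −C), x ∈ Λ, are pairwise disjoint, then |Λ| ≤ 2(9/(γε))ⁿ. -/
/-!
Each translate `x + (εβ/2)·int(C ∩ −C)` has volume `(εβ/2)ⁿ vol(C ∩ −C) ≥ (εβγ/2)ⁿ vol C`,
since the boundary of a convex set is null. By convexity of `C` and `−C` it lies in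
`(4β + εβ/2)(C ∪ −C)`, whose volume is at most `2 (4β + εβ/2)ⁿ vol C`. Disjointness then gives
`|Λ| ≤ 2 ((8 + ε)/(γε))ⁿ`, and `8 + ε ≤ 9`.
-/

open Set Pointwise
open MeasureTheory ENNReal

theorem Finset.card_mul_measure_le_of_pairwiseDisjoint_vadd {G : Type*} [AddGroup G]
    [MeasurableSpace G] [MeasurableAdd G] (μ : Measure G) [μ.IsAddLeftInvariant]
    {S T : Set G} (hS : MeasurableSet S) (Λ : Finset G)
    (hdisj : (Λ : Set G).PairwiseDisjoint (· +ᵥ S)) (hsub : ∀ x ∈ Λ, x +ᵥ S ⊆ T) :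
    Λ.card * μ S ≤ μ T :=
  calc (Λ.card : ℝ≥0∞) * μ S = ∑ x ∈ Λ, μ (x +ᵥ S) := by
        simp only [measure_vadd, Finset.sum_const, nsmul_eq_mul]
    _ = μ (⋃ x ∈ Λ, x +ᵥ S) :=
        (measure_biUnion_finset hdisj fun x _ => hS.const_vadd x).symm
    _ ≤ μ T := measure_mono (iUnion₂_subset hsub)

theorem Convex.add_mem_smul_union_neg {E : Type*} [AddCommGroup E] [Module ℝ E] {C : Set E}
    (hC : Convex ℝ C) {a b : ℝ} (ha : 0 ≤ a) (hb : 0 ≤ b) {x w : E}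
    (hx : x ∈ a • (C ∪ -C)) (hw : w ∈ b • (C ∩ -C)) : x + w ∈ (a + b) • (C ∪ -C) := by
  rw [smul_set_union] at hx ⊢
  rcases hx with hx | hx
  · refine .inl ?_
    rw [hC.add_smul ha hb]
    exact add_mem_add hx (smul_set_mono inter_subset_left hw)
  · refine .inr ?_
    rw [hC.neg.add_smul ha hb]
    exact add_mem_add hx (smul_set_mono inter_subset_right hw)

theorem measure_union_neg_le {G : Type*} [MeasurableSpace G] [InvolutiveNeg G] [MeasurableNeg G]
    (μ : Measure G) [μ.IsNegInvariant] (C : Set G) : μ (C ∪ -C) ≤ 2 * μ C :=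
  calc μ (C ∪ -C) ≤ μ C + μ (-C) := measure_union_le _ _
    _ = 2 * μ C := by rw [Measure.measure_neg, two_mul]

section AddHaar

variable {E : Type*} [NormedAddCommGroup E] [NormedSpace ℝ E] [MeasurableSpace E] [BorelSpace E]
  [FiniteDimensional ℝ E] (μ : Measure E) [μ.IsAddHaarMeasure]

theorem Convex.addHaar_smul_interior {K : Set E} (hK : Convex ℝ K) {r : ℝ} (hr : 0 ≤ r) :
    μ (r • interior K) = ENNReal.ofReal (r ^ Module.finrank ℝ E) * μ K := by
  rw [Measure.addHaar_smul, abs_of_nonneg (by positivity),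
    measure_interior_of_null_frontier (hK.addHaar_frontier μ)]

theorem Convex.card_mul_le_of_pairwiseDisjoint_vadd {C : Set E} (hC : Convex ℝ C)
    {a r γ : ℝ} (ha : 0 ≤ a) (hr : 0 < r)
    (hsym : ENNReal.ofReal (γ ^ Module.finrank ℝ E) * μ C ≤ μ (C ∩ -C))
    (Λ : Finset E) (hΛ : (Λ : Set E) ⊆ a • (C ∪ -C))
    (hdisj : (Λ : Set E).PairwiseDisjoint (· +ᵥ r • interior (C ∩ -C))) :
    Λ.card * ENNReal.ofReal ((r * γ) ^ Module.finrank ℝ E) * μ C ≤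
      ENNReal.ofReal (2 * (a + r) ^ Module.finrank ℝ E) * μ C := by
  set n := Module.finrank ℝ E
  have hsub : ∀ x ∈ Λ, x +ᵥ r • interior (C ∩ -C) ⊆ (a + r) • (C ∪ -C) := by
    rintro x hx _ ⟨w, hw, rfl⟩
    exact hC.add_mem_smul_union_neg ha hr.le (hΛ hx) (smul_set_mono interior_subset hw)
  have hpack := Finset.card_mul_measure_le_of_pairwiseDisjoint_vadd μ
    ((isOpen_interior.smul₀ hr.ne').measurableSet) Λ hdisj hsub
  calc (Λ.card : ℝ≥0∞) * ENNReal.ofReal ((r * γ) ^ n) * μ C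
      = Λ.card * (ENNReal.ofReal (r ^ n) * (ENNReal.ofReal (γ ^ n) * μ C)) := by
        rw [mul_pow, ENNReal.ofReal_mul (by positivity), mul_assoc, mul_assoc]
    _ ≤ Λ.card * μ (r • interior (C ∩ -C)) := by
        rw [(hC.inter hC.neg).addHaar_smul_interior μ hr.le]
        gcongr
    _ ≤ μ ((a + r) • (C ∪ -C)) := hpack
    _ ≤ ENNReal.ofReal ((a + r) ^ n) * (2 * μ C) := by
        rw [Measure.addHaar_smul, abs_of_nonneg (by positivity)]
        gcongr
        exact measure_union_neg_le μ C
    _ = ENNReal.ofReal (2 * (a + r) ^ n) * μ C := by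
        rw [ENNReal.ofReal_mul zero_le_two, ENNReal.ofReal_ofNat]
        ring

theorem Convex.card_le_of_pairwiseDisjoint_vadd {C : Set E} (hC : Convex ℝ C)
    (hC₀ : μ C ≠ 0) (hC_top : μ C ≠ ∞) {a r γ : ℝ} (ha : 0 ≤ a) (hr : 0 < r) (hγ : 0 < γ)
    (hsym : ENNReal.ofReal (γ ^ Module.finrank ℝ E) * μ C ≤ μ (C ∩ -C))
    (Λ : Finset E) (hΛ : (Λ : Set E) ⊆ a • (C ∪ -C))
    (hdisj : (Λ : Set E).PairwiseDisjoint (· +ᵥ r • interior (C ∩ -C))) :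
    (Λ.card : ℝ) ≤ 2 * ((a + r) / (r * γ)) ^ Module.finrank ℝ E := by
  have h := (ENNReal.mul_le_mul_iff_left hC₀ hC_top).mp
    (hC.card_mul_le_of_pairwiseDisjoint_vadd μ ha hr hsym Λ hΛ hdisj)
  rw [← ENNReal.ofReal_natCast, ← ENNReal.ofReal_mul (Nat.cast_nonneg _),
    ENNReal.ofReal_le_ofReal_iff (by positivity)] at h
  rw [div_pow, ← mul_div_assoc, le_div_iff₀ (by positivity)]
  exact h

end AddHaar

theorem lambda_card_bound_general (n : ℕ) (C : Set (Fin n → ℝ))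
    (hconv : Convex ℝ C) (hcomp : IsCompact C) (hint : 0 ∈ interior C)
    (γ : ℝ) (hγ0 : 0 < γ)
    (hsym : ENNReal.ofReal (γ ^ n) * MeasureTheory.volume C ≤
      MeasureTheory.volume (C ∩ -C))
    (β : ℝ) (hβ : 0 < β) (ε : ℝ) (hε0 : 0 < ε) (hε : ε ≤ 1 / 2)
    (Λ : Finset (Fin n → ℝ))
    (hΛ : (Λ : Set (Fin n → ℝ)) ⊆ (4 * β) • (C ∪ -C))
    (hdisj : ∀ x ∈ Λ, ∀ y ∈ Λ, x ≠ y →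
      Disjoint ((fun w => x + w) '' ((ε * β / 2) • interior (C ∩ -C)))
        ((fun w => y + w) '' ((ε * β / 2) • interior (C ∩ -C)))) :
    (Λ.card : ℝ) ≤ 2 * (9 / (γ * ε)) ^ n := by
  have hdim : Module.finrank ℝ (Fin n → ℝ) = n := Module.finrank_fin_fun ℝ
  have hC₀ : volume C ≠ 0 := (Measure.measure_pos_of_nonempty_interior _ ⟨0, hint⟩).ne'
  have hcard := hconv.card_le_of_pairwiseDisjoint_vadd volume hC₀ hcomp.measure_lt_top.ne
    (by positivity) (by positivity) hγ0 (by rwa [hdim]) Λ hΛ hdisj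
  rw [hdim] at hcard
  refine hcard.trans ?_
  have hratio : (4 * β + ε * β / 2) / (ε * β / 2 * γ) ≤ 9 / (γ * ε) := by
    rw [div_le_div_iff₀ (by positivity) (by positivity)]
    nlinarith [mul_pos (mul_pos hβ hγ0) hε0]
  gcongr

/-- Packing bound for the SAP output analysis: if `Λ ⊆ 4β(C ∪ −C)` and the
translates `x + (εβ/2)·int(C ∩ −C)`, `x ∈ Λ`, are pairwise disjoint, then
`|Λ| ≤ 2(9/(γε))ⁿ`. -/
theorem lambda_card_bound (n : ℕ) (C : Set (Fin n → ℝ))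
    (hconv : Convex ℝ C) (hcomp : IsCompact C) (hint : 0 ∈ interior C)
    (γ : ℝ) (hγ0 : 0 < γ) (hγ1 : γ ≤ 1)
    (hsym : ENNReal.ofReal (γ ^ n) * MeasureTheory.volume C ≤
      MeasureTheory.volume (C ∩ -C))
    (β : ℝ) (hβ : 0 < β) (ε : ℝ) (hε0 : 0 < ε) (hε : ε ≤ 1 / 2)
    (Λ : Finset (Fin n → ℝ))
    (hΛ : (Λ : Set (Fin n → ℝ)) ⊆ (4 * β) • (C ∪ -C))
    (hdisj : ∀ x ∈ Λ, ∀ y ∈ Λ, x ≠ y →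
      Disjoint ((fun w => x + w) '' ((ε * β / 2) • interior (C ∩ -C)))
        ((fun w => y + w) '' ((ε * β / 2) • interior (C ∩ -C)))) :
    (Λ.card : ℝ) ≤ 2 * (9 / (γ * ε)) ^ n :=
  lambda_card_bound_general n C hconv hcomp hint γ hγ0 hsym β hβ ε hε0 hε Λ hΛ hdisj
end
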